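/- arXiv:0904.3965 — 3 statements merged into one kernel-verified Lean document; each statement's English description precedes it below -/
import Mathlib

section
/- For integers b > θ ≥ 2 and p ∈ (0,1), define W_p(q) := p + (1-p)·Bin(b,q,θ) - q where Bin(b,q,θ) = Σ_{k=θ}^{b} C(b,k) q^k (1-q)^{b-k}. Then there exists q̃ ∈ (0,1), independent of p, such that W_p is convex on [0,q̃] and concave on [q̃,1]. -/
/-!
The binomial tail `Bin(b, ·, θ)` is the sum of the Bernstein polynomials `B_{b,k}`, `θ ≤ k ≤ b`.
Since the Bernstein polynomials of degree `b` sum to `1` and `B_{b,k+1}' = b (B_{b-1,k} - B_{b-1,k+1})`,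
the derivative telescopes to `Bin' = b B_{b-1,θ-1}`, hence
`Bin'' = b (b-1) (B_{b-2,θ-2} - B_{b-2,θ-1})`. Up to a nonnegative factor the last difference is
`(θ-1) - (b-1) q`, so `W_p'' = (1-p) Bin''` is nonnegative before `q̃ = (θ-1)/(b-1)` and
nonpositive after it.
-/

open Polynomial Finset

namespace bernsteinPolynomial

variable {R : Type*} [CommRing R]

theorem derivative_sum_range (n m : ℕ) :
    derivative (∑ k ∈ range (m + 1), bernsteinPolynomial R (n + 1) k) =
      -((n + 1 : ℕ) : R[X]) * bernsteinPolynomial R n m := by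
  induction m with
  | zero => simpa using derivative_zero (R := R) (n + 1)
  | succ m ih =>
    rw [sum_range_succ, derivative_add, ih, derivative_succ]
    simp only [add_tsub_cancel_right]
    ring

theorem derivative_sum_Icc {n m : ℕ} (h : m ≤ n) :
    derivative (∑ k ∈ Icc (m + 1) (n + 1), bernsteinPolynomial R (n + 1) k) =
      ((n + 1 : ℕ) : R[X]) * bernsteinPolynomial R n m := by
  have hsplit := sum_range_add_sum_Ico (fun k => bernsteinPolynomial R (n + 1) k)
    (by omega : m + 1 ≤ n + 1 + 1)
  rw [sum, Ico_add_one_right_eq_Icc] at hsplit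
  rw [eq_sub_of_add_eq' hsplit, derivative_sub, derivative_one, derivative_sum_range, zero_sub,
    neg_mul, neg_neg]

theorem eval_sub_succ {n m : ℕ} (h : m < n) (x : R) :
    ((m + 1 : ℕ) : R) * (bernsteinPolynomial R n m - bernsteinPolynomial R n (m + 1)).eval x =
      n.choose m * x ^ m * (1 - x) ^ (n - m - 1) * ((m + 1 : ℕ) - (n + 1 : ℕ) * x) := by
  obtain ⟨r, rfl⟩ : ∃ r, n = m + 1 + r := ⟨n - (m + 1), by omega⟩
  have hchoose := Nat.choose_succ_right_eq (m + 1 + r) m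
  rw [show m + 1 + r - m = r + 1 by omega] at hchoose
  simp only [bernsteinPolynomial, eval_sub, eval_mul, eval_pow, eval_natCast, eval_X, eval_one]
  rw [show m + 1 + r - m = r + 1 by omega, show m + 1 + r - (m + 1) = r by omega,
    show r + 1 - 1 = r by omega]
  have hc := congrArg (Nat.cast : ℕ → R) hchoose
  push_cast at hc ⊢
  linear_combination (-(x ^ (m + 1) * (1 - x) ^ r)) * hc

theorem derivative_derivative_sum_Icc {n m : ℕ} (h : m ≤ n) :
    derivative (derivative (∑ k ∈ Icc (m + 2) (n + 2), bernsteinPolynomial R (n + 2) k)) =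
      ((n + 2 : ℕ) * (n + 1 : ℕ) : R[X]) *
        (bernsteinPolynomial R n m - bernsteinPolynomial R n (m + 1)) := by
  rw [derivative_sum_Icc (by omega : m + 1 ≤ n + 1), derivative_natCast_mul, derivative_succ,
    add_tsub_cancel_right, mul_assoc]

section Sign

variable {K : Type*} [Field K] [LinearOrder K] [IsStrictOrderedRing K] {n m : ℕ} {x : K}

theorem eval_sub_succ_nonneg (h : m < n) (hx₀ : 0 ≤ x) (hx : (n + 1 : ℕ) * x ≤ (m + 1 : ℕ)) :
    0 ≤ (bernsteinPolynomial K n m - bernsteinPolynomial K n (m + 1)).eval x := by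
  have hmn : ((m + 1 : ℕ) : K) < (n + 1 : ℕ) := by exact_mod_cast Nat.succ_lt_succ h
  have hx₁ : x ≤ 1 := by nlinarith
  have h1x : 0 ≤ 1 - x := by linarith
  have hfactor : (0 : K) ≤ (m + 1 : ℕ) - (n + 1 : ℕ) * x := by linarith
  refine (mul_nonneg_iff_of_pos_left (by positivity : (0 : K) < (m + 1 : ℕ))).1 ?_
  rw [eval_sub_succ h x]
  positivity

theorem eval_sub_succ_nonpos (h : m < n) (hx₁ : x ≤ 1) (hx : (m + 1 : ℕ) ≤ (n + 1 : ℕ) * x) :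
    (bernsteinPolynomial K n m - bernsteinPolynomial K n (m + 1)).eval x ≤ 0 := by
  have hx₀ : 0 ≤ x := by
    have : (0 : K) < (m + 1 : ℕ) := by positivity
    nlinarith
  have h1x : 0 ≤ 1 - x := by linarith
  have hfactor : (m + 1 : ℕ) - (n + 1 : ℕ) * x ≤ (0 : K) := by linarith
  refine nonpos_of_mul_nonpos_right ?_ (by positivity : (0 : K) < (m + 1 : ℕ))
  rw [eval_sub_succ h x]
  exact mul_nonpos_of_nonneg_of_nonpos (by positivity) hfactor

end Sign

end bernsteinPolynomial

namespace Polynomial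

variable {D : Set ℝ}

theorem convexOn_of_eval_derivative_derivative_nonneg (hD : Convex ℝ D) (P : ℝ[X])
    (h : ∀ x ∈ interior D, 0 ≤ (derivative (derivative P)).eval x) :
    ConvexOn ℝ D fun x => P.eval x :=
  convexOn_of_hasDerivWithinAt2_nonneg hD P.continuousOn
    (fun x _ => (P.hasDerivAt x).hasDerivWithinAt)
    (fun x _ => (P.derivative.hasDerivAt x).hasDerivWithinAt) h

theorem concaveOn_of_eval_derivative_derivative_nonpos (hD : Convex ℝ D) (P : ℝ[X])
    (h : ∀ x ∈ interior D, (derivative (derivative P)).eval x ≤ 0) :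
    ConcaveOn ℝ D fun x => P.eval x :=
  concaveOn_of_hasDerivWithinAt2_nonpos hD P.continuousOn
    (fun x _ => (P.hasDerivAt x).hasDerivWithinAt)
    (fun x _ => (P.derivative.hasDerivAt x).hasDerivWithinAt) h

end Polynomial

theorem convex_concave (b θ : ℕ) (hθ : 2 ≤ θ) (hb : θ < b) :
    ∃ qt ∈ Set.Ioo (0:ℝ) 1, ∀ p ∈ Set.Ioo (0:ℝ) 1,
      ConvexOn ℝ (Set.Icc (0:ℝ) qt)
        (fun q : ℝ => p + (1 - p) * (∑ k ∈ Finset.Icc θ b, (b.choose k : ℝ) * q ^ k * (1 - q) ^ (b - k)) - q) ∧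
      ConcaveOn ℝ (Set.Icc qt 1)
        (fun q : ℝ => p + (1 - p) * (∑ k ∈ Finset.Icc θ b, (b.choose k : ℝ) * q ^ k * (1 - q) ^ (b - k)) - q) := by
  obtain ⟨m, rfl⟩ : ∃ m, θ = m + 2 := ⟨θ - 2, by omega⟩
  obtain ⟨n, rfl⟩ : ∃ n, b = n + 2 := ⟨b - 2, by omega⟩
  have hmn : m < n := by omega
  have hn : (0 : ℝ) < (n + 1 : ℕ) := by positivity
  have hqt : ((m + 1 : ℕ) : ℝ) / (n + 1 : ℕ) < 1 :=
    (div_lt_one hn).2 (by exact_mod_cast Nat.succ_lt_succ hmn)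
  refine ⟨(m + 1 : ℕ) / (n + 1 : ℕ), ⟨by positivity, hqt⟩, fun p hp => ?_⟩
  set T := ∑ k ∈ Icc (m + 2) (n + 2), bernsteinPolynomial ℝ (n + 2) k
  have hW : (fun q : ℝ => p + (1 - p) * (∑ k ∈ Icc (m + 2) (n + 2),
      ((n + 2).choose k : ℝ) * q ^ k * (1 - q) ^ (n + 2 - k)) - q) =
      fun q => (C p + C (1 - p) * T - X).eval q := by
    ext q
    simp [T, bernsteinPolynomial, eval_finsetSum]
  have hW'' (x : ℝ) : (derivative (derivative (C p + C (1 - p) * T - X))).eval x =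
      (1 - p) * ((n + 2 : ℕ) * (n + 1 : ℕ)) *
        (bernsteinPolynomial ℝ n m - bernsteinPolynomial ℝ n (m + 1)).eval x := by
    rw [derivative_sub, derivative_add, derivative_C_mul, derivative_sub, derivative_add,
      derivative_C_mul, bernsteinPolynomial.derivative_derivative_sum_Icc hmn.le]
    simp [mul_assoc]
  have hcoeff : 0 ≤ (1 - p) * ((n + 2 : ℕ) * (n + 1 : ℕ)) :=
    mul_nonneg (by linarith [hp.2]) (by positivity)
  rw [hW]
  constructor
  · refine convexOn_of_eval_derivative_derivative_nonneg (convex_Icc _ _) _ fun x hx => ?_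
    rw [interior_Icc] at hx
    rw [hW'']
    exact mul_nonneg hcoeff
      (bernsteinPolynomial.eval_sub_succ_nonneg hmn hx.1.le ((le_div_iff₀' hn).1 hx.2.le))
  · refine concaveOn_of_eval_derivative_derivative_nonpos (convex_Icc _ _) _ fun x hx => ?_
    rw [interior_Icc] at hx
    rw [hW'']
    exact mul_nonpos_of_nonneg_of_nonpos hcoeff
      (bernsteinPolynomial.eval_sub_succ_nonpos hmn hx.2.le ((div_le_iff₀' hn).1 hx.1.le))
end

section
/- For integers b > θ ≥ 2, let a := max_{q∈[0,1]} (d/dq)Bin(b,q,θ). Then a > 1; equivalently, b·C(b-1,θ-1)·q̃^{θ-1}(1-q̃)^{b-θ} > 1 where q̃ = (θ-1)/(b-1). -/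
open Finset

lemma max_deriv_bin_key (n k : ℕ) (hk : 1 ≤ k) (hkn : k < n) :
    (1:ℝ) < ((n:ℝ)+1) * ((n.choose k : ℝ) * ((k:ℝ)/n)^k * (1 - (k:ℝ)/n)^(n-k)) := by
  have hn0 : (0:ℝ) < n := by
    have : 0 < n := lt_trans (Nat.lt_of_lt_of_le Nat.zero_lt_one hk) hkn
    exact_mod_cast this
  have hkR : (0:ℝ) < k := by exact_mod_cast Nat.lt_of_lt_of_le Nat.zero_lt_one hk
  have hknR : (k:ℝ) < n := by exact_mod_cast hkn
  set q : ℝ := (k:ℝ)/n with hq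
  have hq0 : 0 < q := div_pos hkR hn0
  have hq1 : q < 1 := (div_lt_one hn0).mpr hknR
  have h1q : 0 < 1 - q := by linarith
  set f : ℕ → ℝ := fun j => (n.choose j : ℝ) * q^j * (1-q)^(n-j) with hf
  have hpos : ∀ j, j ≤ n → 0 < f j := by
    intro j hj
    have : 0 < n.choose j := Nat.choose_pos hj
    have hc : (0:ℝ) < (n.choose j : ℝ) := by exact_mod_cast this
    positivity
  have hsum : ∑ j ∈ range (n+1), f j = 1 := by
    have h := add_pow q (1-q) n
    have h2 : q + (1-q) = 1 := by ring
    rw [h2, one_pow] at h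
    conv_rhs => rw [h]
    apply Finset.sum_congr rfl
    intro j _
    ring
  -- key ratio identity
  have hstep : ∀ j, j < n →
      f (j+1) * (((j:ℝ)+1) * ((n:ℝ)-k)) = f j * (((n:ℝ)-(j:ℝ)) * k) := by
    intro j hj
    have hcc : (n.choose (j+1) : ℝ) * ((j:ℝ)+1) = (n.choose j : ℝ) * ((n:ℝ)-(j:ℝ)) := by
      have := Nat.choose_succ_right_eq n j
      have h2 : ((n.choose (j+1) * (j+1) : ℕ) : ℝ) = ((n.choose j * (n - j) : ℕ) : ℝ) := by
        exact_mod_cast congrArg (Nat.cast (R := ℝ)) this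
      push_cast [Nat.cast_sub hj.le] at h2
      linarith [h2]
    have hnj : n - j = (n - (j+1)) + 1 := by omega
    have hqk : q * ((n:ℝ)-k) = (1-q) * k := by
      rw [hq]; field_simp
    simp only [hf]
    rw [hnj]
    linear_combination (q^j * (1-q)^(n-(j+1)) * (q*((n:ℝ)-(k:ℝ)))) * hcc +
      ((n.choose j : ℝ) * ((n:ℝ)-(j:ℝ)) * q^j * (1-q)^(n-(j+1))) * hqk
  have hup : ∀ j, j < k → f j < f (j+1) := by
    intro j hj
    have hjn : j < n := hj.trans hkn
    have hjR : (j:ℝ) < k := by exact_mod_cast hj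
    have hA : (0:ℝ) < ((j:ℝ)+1) * ((n:ℝ)-k) := by nlinarith
    have hAB : ((j:ℝ)+1) * ((n:ℝ)-k) < ((n:ℝ)-(j:ℝ)) * k := by
      have hj1 : (j:ℝ)+1 ≤ k := by exact_mod_cast hj
      nlinarith
    have hfj := hpos j hjn.le
    have := hstep j hjn
    nlinarith
  have hdown : ∀ j, k ≤ j → j < n → f (j+1) ≤ f j := by
    intro j hkj hjn
    have hjR : (k:ℝ) ≤ j := by exact_mod_cast hkj
    have hA : (0:ℝ) < ((j:ℝ)+1) * ((n:ℝ)-k) := by nlinarith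
    have hAB : ((n:ℝ)-(j:ℝ)) * k ≤ ((j:ℝ)+1) * ((n:ℝ)-k) := by nlinarith
    have hfj := hpos j hjn.le
    have := hstep j hjn
    nlinarith
  have hmaxle : ∀ j, j ≤ n → f j ≤ f k := by
    intro j hj
    rcases le_or_gt j k with h | h
    · -- increase from j to k
      have : ∀ m, j ≤ m → m ≤ k → f j ≤ f m := by
        intro m hm
        induction m, hm using Nat.le_induction with
        | base => intro _; exact le_refl _
        | succ m hm ih =>
          intro hmk
          have hmk' : m < k := lt_of_lt_of_le (Nat.lt_succ_self m) hmk
          exact (ih hmk'.le).trans (hup m hmk').le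
      exact this k h le_rfl
    · have : ∀ m, k ≤ m → m ≤ n → f m ≤ f k := by
        intro m hm
        induction m, hm using Nat.le_induction with
        | base => intro _; exact le_refl _
        | succ m hm ih =>
          intro hmn
          have hmn' : m < n := lt_of_lt_of_le (Nat.lt_succ_self m) hmn
          exact (hdown m hm hmn').trans (ih hmn'.le)
      exact this j h.le hj
  have h0lt : f 0 < f k := by
    calc f 0 < f 1 := hup 0 hk
    _ ≤ f k := hmaxle 1 (le_of_lt (lt_of_le_of_lt hk hkn))
  have hfinal : (1:ℝ) < ((n:ℝ)+1) * f k := by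
    have hlt : ∑ j ∈ range (n+1), f j < ∑ j ∈ range (n+1), f k := by
      apply Finset.sum_lt_sum
      · intro j hj
        exact hmaxle j (Nat.lt_succ_iff.mp (Finset.mem_range.mp hj))
      · exact ⟨0, Finset.mem_range.mpr (Nat.succ_pos n), h0lt⟩
    rw [hsum] at hlt
    simpa [Finset.sum_const, nsmul_eq_mul, add_comm] using hlt
  simpa [hf, hq, mul_assoc] using hfinal

theorem max_deriv_bin_gt_one (b θ : ℕ) (hθ : 2 ≤ θ) (hb : θ < b) :
    (b : ℝ) * ((b - 1).choose (θ - 1) : ℝ) *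
      ((((θ : ℝ) - 1) / ((b : ℝ) - 1)) ^ (θ - 1)) *
      ((1 - ((θ : ℝ) - 1) / ((b : ℝ) - 1)) ^ (b - θ)) > 1 := by
  have h := max_deriv_bin_key (b-1) (θ-1) (by omega) (by omega)
  have h1 : ((b-1 : ℕ) : ℝ) = (b:ℝ) - 1 := by
    have : 1 ≤ b := by omega
    push_cast [Nat.cast_sub this]; ring
  have h2 : ((θ-1 : ℕ) : ℝ) = (θ:ℝ) - 1 := by
    have : 1 ≤ θ := by omega
    push_cast [Nat.cast_sub this]; ring
  have h3 : (b-1) - (θ-1) = b - θ := by omega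
  rw [h1, h2, h3] at h
  have h4 : ((b:ℝ) - 1) + 1 = b := by ring
  rw [h4] at h
  linarith [h]
end

section
/- For integers b > θ ≥ 2, there exists p_T ∈ (0,1) such that min_{q∈[0,1]} W_{p_T}(q) = 0, where W_p(q) = p + (1-p)·Bin(b,q,θ) - q; moreover for p < p_T the minimum is negative and for p > p_T the minimum over [0,1) is positive. -/
/-!
For `q < 1` write `W_p(q) = (1 - Bin(q)) (p - c(q))` with `c(q) = (q - Bin(q)) / (1 - Bin(q))`, the
unique `p` making `q` a zero of `W_p`; the factor `1 - Bin(q)` is positive. Then `p_T` is the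
maximum of `c` on `[0, 1)`. It exists and lies in `(0, 1)` because `θ ≥ 2` gives
`Bin(q) ≤ 2^b q^2 < q` for small `q > 0` (so `c > 0` there), while `θ < b` gives
`1 - Bin(q) ≤ 2^b (1 - q)^2 ≤ 1 - q` for `q` near `1` (so `c ≤ 0` there), and `c` is continuous on
the compact interval in between. The three sign claims are then read off the factorisation.
-/

open Finset

namespace BinomialThreshold

noncomputable def binTail (b θ : ℕ) (q : ℝ) : ℝ :=
  ∑ k ∈ Icc θ b, (b.choose k : ℝ) * q ^ k * (1 - q) ^ (b - k)

lemma sum_binomial_terms (b : ℕ) (q : ℝ) :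
    ∑ k ∈ range (b + 1), (b.choose k : ℝ) * q ^ k * (1 - q) ^ (b - k) = 1 := by
  simpa [bernsteinPolynomial, Polynomial.eval_finsetSum] using
    congrArg (Polynomial.eval q) (bernsteinPolynomial.sum ℝ b)

lemma sum_choose_mul_le_two_pow_mul {b : ℕ} {s : Finset ℕ} {f : ℕ → ℝ} {x : ℝ}
    (hs : s ⊆ range (b + 1)) (hx : 0 ≤ x) (hf : ∀ k ∈ s, f k ≤ x) :
    ∑ k ∈ s, (b.choose k : ℝ) * f k ≤ 2 ^ b * x :=
  calc ∑ k ∈ s, (b.choose k : ℝ) * f k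
      ≤ ∑ k ∈ s, (b.choose k : ℝ) * x :=
        sum_le_sum fun k hk => mul_le_mul_of_nonneg_left (hf k hk) (by positivity)
    _ = (∑ k ∈ s, (b.choose k : ℝ)) * x := (sum_mul ..).symm
    _ ≤ (∑ k ∈ range (b + 1), (b.choose k : ℝ)) * x := by gcongr
    _ = 2 ^ b * x := by rw [← Nat.cast_sum, Nat.sum_range_choose, Nat.cast_pow, Nat.cast_ofNat]

variable {b θ : ℕ} {q : ℝ}

lemma one_sub_binTail_eq (hθb : θ ≤ b) :
    1 - binTail b θ q = ∑ k ∈ range θ, (b.choose k : ℝ) * q ^ k * (1 - q) ^ (b - k) := by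
  have h := sum_range_add_sum_Ico (fun k => (b.choose k : ℝ) * q ^ k * (1 - q) ^ (b - k))
    (by omega : θ ≤ b + 1)
  rw [sum_binomial_terms] at h
  rw [binTail, ← Ico_add_one_right_eq_Icc]
  linarith

lemma binTail_le (h0 : 0 ≤ q) (h1 : q ≤ 1) : binTail b θ q ≤ 2 ^ b * q ^ θ := by
  have hsub : Icc θ b ⊆ range (b + 1) := fun k hk => by simp only [mem_Icc, mem_range] at hk ⊢; omega
  refine (sum_congr rfl fun k _ => mul_assoc _ _ _).trans_le <|
    sum_choose_mul_le_two_pow_mul hsub (by positivity) fun k hk => ?_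
  calc q ^ k * (1 - q) ^ (b - k) ≤ q ^ k * 1 := by
        gcongr
        exact pow_le_one₀ (sub_nonneg.2 h1) (by linarith)
    _ ≤ q ^ θ := by rw [mul_one]; exact pow_le_pow_of_le_one h0 h1 (mem_Icc.1 hk).1

lemma one_sub_binTail_le (hθb : θ ≤ b) (h0 : 0 ≤ q) (h1 : q ≤ 1) :
    1 - binTail b θ q ≤ 2 ^ b * (1 - q) ^ (b + 1 - θ) := by
  have hsub : range θ ⊆ range (b + 1) := range_subset_range.2 (by omega)
  rw [one_sub_binTail_eq hθb]
  refine (sum_congr rfl fun k _ => mul_assoc _ _ _).trans_le <|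
    sum_choose_mul_le_two_pow_mul hsub (by have := sub_nonneg.2 h1; positivity) fun k hk => ?_
  calc q ^ k * (1 - q) ^ (b - k) ≤ 1 * (1 - q) ^ (b - k) := by
        gcongr
        exact pow_le_one₀ h0 h1
    _ ≤ (1 - q) ^ (b + 1 - θ) := by
        rw [one_mul]
        exact pow_le_pow_of_le_one (sub_nonneg.2 h1) (by linarith) (by have := mem_range.1 hk; omega)

lemma one_sub_binTail_nonneg (hθb : θ ≤ b) (h0 : 0 ≤ q) (h1 : q ≤ 1) :
    0 ≤ 1 - binTail b θ q := by
  rw [one_sub_binTail_eq hθb]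
  exact sum_nonneg fun k _ => by have := sub_nonneg.2 h1; positivity

-- The `k = 0` term `(1 - q) ^ b` of the lower sum is already positive.
lemma one_sub_binTail_pos (hθ : 1 ≤ θ) (hθb : θ ≤ b) (h0 : 0 ≤ q) (h1 : q < 1) :
    0 < 1 - binTail b θ q := by
  rw [one_sub_binTail_eq hθb]
  refine lt_of_lt_of_le ?_ (single_le_sum (fun k _ => ?_) (mem_range.2 hθ))
  · simpa using pow_pos (sub_pos.2 h1) b
  · have := sub_nonneg.2 h1.le
    positivity

lemma binTail_one (hθb : θ ≤ b) : binTail b θ 1 = 1 := by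
  have := one_sub_binTail_eq (q := 1) hθb
  rw [sum_eq_zero fun k hk => by simp [zero_pow (by have := mem_range.1 hk; omega : b - k ≠ 0)]] at this
  linarith

noncomputable def W (b θ : ℕ) (p q : ℝ) : ℝ := p + (1 - p) * binTail b θ q - q

noncomputable def critP (b θ : ℕ) (q : ℝ) : ℝ := (q - binTail b θ q) / (1 - binTail b θ q)

lemma W_one (hθb : θ ≤ b) (p : ℝ) : W b θ p 1 = 0 := by
  simp [W, binTail_one hθb]

lemma W_eq_mul (p : ℝ) (hd : 1 - binTail b θ q ≠ 0) :
    W b θ p q = (1 - binTail b θ q) * (p - critP b θ q) := by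
  rw [W, critP, mul_sub, mul_div_cancel₀ _ hd]
  ring

lemma critP_lt_one (hd : 0 < 1 - binTail b θ q) (h1 : q < 1) : critP b θ q < 1 :=
  (div_lt_one hd).2 (by linarith)

lemma continuousOn_critP (hθ : 1 ≤ θ) (hθb : θ ≤ b) : ContinuousOn (critP b θ) (Set.Ico 0 1) := by
  have hB : Continuous (binTail b θ) := by unfold binTail; fun_prop
  exact (continuous_id.sub hB).continuousOn.div (continuous_const.sub hB).continuousOn
    fun q hq => (one_sub_binTail_pos hθ hθb hq.1 hq.2).ne'

lemma critP_pos_of_small (hθ : 2 ≤ θ) (hθb : θ ≤ b) : 0 < critP b θ (1 / 2 ^ (b + 1)) := by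
  set q₀ : ℝ := 1 / 2 ^ (b + 1)
  have hq₀ : 0 < q₀ := by positivity
  have hq₀1 : q₀ < 1 := by rw [div_lt_one (by positivity)]; exact one_lt_pow₀ one_lt_two (by omega)
  have h2q₀ : 2 ^ b * q₀ = 1 / 2 := by simp only [q₀, pow_succ]; field_simp
  refine div_pos (sub_pos.2 ?_) (one_sub_binTail_pos (by omega) hθb hq₀.le hq₀1)
  calc binTail b θ q₀ ≤ 2 ^ b * q₀ ^ θ := binTail_le hq₀.le hq₀1.le
    _ ≤ 2 ^ b * q₀ ^ 2 := by gcongr 2 ^ b * ?_; exact pow_le_pow_of_le_one hq₀.le hq₀1.le hθ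
    _ < q₀ := by nlinarith

lemma critP_nonpos_of_near_one (hθb : θ < b) (h0 : 0 ≤ q) (h1 : q < 1)
    (hq : 2 ^ b * (1 - q) ≤ 1) : critP b θ q ≤ 0 := by
  refine div_nonpos_of_nonpos_of_nonneg (sub_nonpos.2 ?_)
    (one_sub_binTail_nonneg hθb.le h0 h1.le)
  have : 1 - binTail b θ q ≤ 1 - q :=
    calc 1 - binTail b θ q ≤ 2 ^ b * (1 - q) ^ (b + 1 - θ) := one_sub_binTail_le hθb.le h0 h1.le
      _ ≤ 2 ^ b * (1 - q) ^ 2 := by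
          gcongr 2 ^ b * ?_
          exact pow_le_pow_of_le_one (sub_nonneg.2 h1.le) (by linarith) (by omega)
      _ = (2 ^ b * (1 - q)) * (1 - q) := by ring
      _ ≤ 1 - q := mul_le_of_le_one_left (sub_nonneg.2 h1.le) hq
  linarith

lemma exists_isMaxOn_critP (hθ : 2 ≤ θ) (hθb : θ < b) :
    ∃ qs ∈ Set.Ico (0 : ℝ) 1, IsMaxOn (critP b θ) (Set.Ico 0 1) qs ∧ 0 < critP b θ qs := by
  have h2b : (0 : ℝ) < 2 ^ b := by positivity
  have hhalf : (1 : ℝ) / 2 ^ b ≤ 1 / 2 :=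
    one_div_le_one_div_of_le two_pos (le_self_pow₀ one_le_two (by omega))
  set K := Set.Icc (0 : ℝ) (1 - 1 / 2 ^ b)
  have hK : K ⊆ Set.Ico 0 1 := fun q hq => ⟨hq.1, hq.2.trans_lt (by simp [h2b])⟩
  have hq₀ : (1 : ℝ) / 2 ^ (b + 1) ∈ K := by
    refine ⟨by positivity, ?_⟩
    rw [pow_succ, ← div_div]
    linarith
  obtain ⟨qs, hqs, hmax⟩ := isCompact_Icc.exists_isMaxOn ⟨_, hq₀⟩
    ((continuousOn_critP (by omega) hθb.le).mono hK)
  have hpos : 0 < critP b θ qs := (critP_pos_of_small hθ hθb.le).trans_le (hmax hq₀)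
  refine ⟨qs, hK hqs, fun q hq => ?_, hpos⟩
  by_cases hqK : q ≤ 1 - 1 / 2 ^ b
  · exact hmax ⟨hq.1, hqK⟩
  · refine (critP_nonpos_of_near_one hθb hq.1 hq.2 ?_).trans hpos.le
    rw [not_le, sub_lt_comm, lt_div_iff₀ h2b] at hqK
    linarith

lemma W_pos_of_critP_lt (hθ : 1 ≤ θ) (hθb : θ ≤ b) (hq : q ∈ Set.Ico 0 1) {p : ℝ}
    (hp : critP b θ q < p) : 0 < W b θ p q := by
  have hd := one_sub_binTail_pos hθ hθb hq.1 hq.2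
  rw [W_eq_mul p hd.ne']
  exact mul_pos hd (sub_pos.2 hp)

lemma W_nonneg_of_critP_le (hθ : 1 ≤ θ) (hθb : θ ≤ b) (hq : q ∈ Set.Ico 0 1) {p : ℝ}
    (hp : critP b θ q ≤ p) : 0 ≤ W b θ p q := by
  have hd := one_sub_binTail_pos hθ hθb hq.1 hq.2
  rw [W_eq_mul p hd.ne']
  exact mul_nonneg hd.le (sub_nonneg.2 hp)

lemma W_neg_of_lt_critP (hθ : 1 ≤ θ) (hθb : θ ≤ b) (hq : q ∈ Set.Ico 0 1) {p : ℝ}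
    (hp : p < critP b θ q) : W b θ p q < 0 := by
  have hd := one_sub_binTail_pos hθ hθb hq.1 hq.2
  rw [W_eq_mul p hd.ne']
  exact mul_neg_of_pos_of_neg hd (sub_neg.2 hp)

end BinomialThreshold

open BinomialThreshold

theorem exists_pT (b θ : ℕ) (hθ : 2 ≤ θ) (hb : θ < b) :
    ∃ pT ∈ Set.Ioo (0:ℝ) 1,
      IsLeast
        ((fun q : ℝ => pT + (1 - pT) * (∑ k ∈ Finset.Icc θ b, (b.choose k : ℝ) * q ^ k * (1 - q) ^ (b - k)) - q) ''
          Set.Icc (0:ℝ) 1) 0 ∧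
      (∀ p : ℝ, 0 < p → p < pT →
        ∃ q ∈ Set.Icc (0:ℝ) 1,
          p + (1 - p) * (∑ k ∈ Finset.Icc θ b, (b.choose k : ℝ) * q ^ k * (1 - q) ^ (b - k)) - q < 0) ∧
      (∀ p : ℝ, pT < p → p < 1 →
        ∀ q ∈ Set.Ico (0:ℝ) 1,
          0 < p + (1 - p) * (∑ k ∈ Finset.Icc θ b, (b.choose k : ℝ) * q ^ k * (1 - q) ^ (b - k)) - q) := by
  have hθ₁ : 1 ≤ θ := by omega
  obtain ⟨qs, hqs, hmax, hpos⟩ := exists_isMaxOn_critP hθ hb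
  have hlt : critP b θ qs < 1 :=
    critP_lt_one (one_sub_binTail_pos hθ₁ hb.le hqs.1 hqs.2) hqs.2
  refine ⟨critP b θ qs, ⟨hpos, hlt⟩, ⟨⟨1, ⟨zero_le_one, le_rfl⟩, W_one hb.le _⟩, ?_⟩, ?_, ?_⟩
  · rintro _ ⟨q, ⟨h0, h1⟩, rfl⟩
    rcases h1.lt_or_eq with h1 | rfl
    · exact W_nonneg_of_critP_le hθ₁ hb.le ⟨h0, h1⟩ (hmax ⟨h0, h1⟩)
    · exact (W_one hb.le _).ge
  · exact fun p _ hp => ⟨qs, Set.Ico_subset_Icc_self hqs, W_neg_of_lt_critP hθ₁ hb.le hqs hp⟩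
  · exact fun p hp _ q hq => W_pos_of_critP_lt hθ₁ hb.le hq ((hmax hq).trans_lt hp)
end
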